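/- arXiv:0906.2535 — 5 statements merged into one kernel-verified Lean document; each statement's English description precedes it below -/
import Mathlib

section
/- For any vertex x and any function u of finite energy, the energy inner product satisfies ⟨δ_x, u⟩_E = (Δu)(x), where Δ is the network Laplacian. -/
/-! Expanding `δ_x(s) - δ_x(t)` splits the energy sum into the pairs with first coordinate `x`
and those with second coordinate `x` (the pair `(x, x)` contributes nothing, as `c x x = 0`).
By symmetry of `c` each of the two families sums to `(Δu)(x)`, which cancels the factor `1/2`. -/

section FiberSums

variable {α β M : Type*} [AddCommMonoid M] [TopologicalSpace M] {g : β → M} {a : M}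

theorem HasSum.ite_fst_eq [DecidableEq α] (x : α) (h : HasSum g a) :
    HasSum (fun p : α × β => if p.1 = x then g p.2 else 0) a := by
  refine ((Prod.mk_right_injective x).hasSum_iff ?_).mp (by simpa [Function.comp_def] using h)
  rintro ⟨s, t⟩ hst
  have hs : s ≠ x := by rintro rfl; exact hst ⟨t, rfl⟩
  simp [hs]

theorem HasSum.ite_snd_eq [DecidableEq β] {g : α → M} (x : β) (h : HasSum g a) :
    HasSum (fun p : α × β => if p.2 = x then g p.1 else 0) a := by
  refine ((Prod.mk_left_injective x).hasSum_iff ?_).mp (by simpa [Function.comp_def] using h)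
  rintro ⟨s, t⟩ hst
  have ht : t ≠ x := by rintro rfl; exact hst ⟨s, rfl⟩
  simp [ht]

end FiberSums

theorem einner_dirac_eq_laplacian_general {V : Type*} [DecidableEq V]
    (c : V → V → ℝ)
    (hsymm : ∀ x y, c x y = c y x)
    (hloop : ∀ x, c x x = 0)
    (x : V)
    (u : V → ℝ)
    (hLap : Summable (fun y => c x y * (u x - u y))) :
    (1 / 2) * ∑' p : V × V,
        c p.1 p.2 * ((if p.1 = x then (1:ℝ) else 0) - (if p.2 = x then (1:ℝ) else 0))
          * (u p.1 - u p.2)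
      = ∑' y : V, c x y * (u x - u y) := by
  have hsplit : ∀ p : V × V,
      c p.1 p.2 * ((if p.1 = x then (1:ℝ) else 0) - (if p.2 = x then (1:ℝ) else 0))
          * (u p.1 - u p.2)
        = (if p.1 = x then c x p.2 * (u x - u p.2) else 0)
          + (if p.2 = x then c x p.1 * (u x - u p.1) else 0) := by
    rintro ⟨s, t⟩
    by_cases hs : s = x <;> by_cases ht : t = x
    · simp [hs, ht, hloop]
    · simp [hs, ht]
    · simp only [hs, ht, hsymm s x, if_true, if_false]; ring
    · simp [hs, ht]
  have hsum := (hLap.hasSum.ite_fst_eq x).add (hLap.hasSum.ite_snd_eq x)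
  rw [tsum_congr hsplit, hsum.tsum_eq]
  ring

/-- For any vertex `x` and any function `u` of finite energy,
the energy inner product satisfies `⟨δ_x, u⟩_E = (Δu)(x)`, where
`⟨v, u⟩_E = (1/2) Σ_{s,t} c_{st} (v s - v t)(u s - u t)` and
`(Δu)(x) = Σ_y c_{xy} (u x - u y)`. -/
theorem einner_dirac_eq_laplacian {V : Type*} [DecidableEq V]
    (c : V → V → ℝ)
    (hsymm : ∀ x y, c x y = c y x)
    (hnonneg : ∀ x y, 0 ≤ c x y)
    (hloop : ∀ x, c x x = 0)
    (x : V)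
    (hdeg : Summable (fun y => c x y))
    (u : V → ℝ)
    (hfin : Summable (fun p : V × V => c p.1 p.2 * (u p.1 - u p.2) ^ 2))
    (hpair : Summable (fun p : V × V =>
        c p.1 p.2 * ((if p.1 = x then (1:ℝ) else 0) - (if p.2 = x then (1:ℝ) else 0))
          * (u p.1 - u p.2)))
    (hLap : Summable (fun y => c x y * (u x - u y))) :
    (1 / 2) * ∑' p : V × V,
        c p.1 p.2 * ((if p.1 = x then (1:ℝ) else 0) - (if p.2 = x then (1:ℝ) else 0))
          * (u p.1 - u p.2)
      = ∑' y : V, c x y * (u x - u y) :=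
  einner_dirac_eq_laplacian_general c hsymm hloop x u hLap
end

section
/- On a finite connected resistance network, R(x,y) equals the supremum of |v(x) − v(y)|² over all functions v with E(v) ≤ 1; equivalently, R(x,y) is the smallest constant κ ≥ 0 such that |v(x) − v(y)|² ≤ κ E(v) for all v of finite energy. -/
/-!
The energy `E(u, v) = ½ ∑ₛ ∑ₜ c s t (u s - u t)(v s - v t)` is a positive semidefinite symmetric
bilinear form, and the discrete Green formula `E(u, v) = ∑ₛ (Δu)(s) v(s)` shows that the dipole
potential `w` reproduces the functional `v ↦ v x - v y`: `E(w, v) = v x - v y`. Hence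
`R = w x - w y = E(w, w)`, and Cauchy–Schwarz gives `(v x - v y)² = E(w, v)² ≤ R · E(v)`, with
equality for `v = w / √R`.
-/

namespace LinearMap.BilinForm

variable {M : Type*} [AddCommGroup M] [Module ℝ M] {B : LinearMap.BilinForm ℝ M}
  {L : M → ℝ} {w : M}

theorem sq_le_mul_apply_self_of_reproduces (hs : ∀ v, 0 ≤ B v v) (hB : LinearMap.IsSymm B)
    (hw : ∀ v, B w v = L v) (v : M) : L v ^ 2 ≤ L w * B v v := by
  rw [← hw, ← hw]
  exact B.apply_sq_le_of_symm hs hB w v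

theorem isGreatest_sq_of_reproduces (hs : ∀ v, 0 ≤ B v v) (hB : LinearMap.IsSymm B)
    (hw : ∀ v, B w v = L v) :
    IsGreatest {r : ℝ | ∃ v : M, B v v ≤ 1 ∧ r = L v ^ 2} (L w) := by
  set R := L w
  have hR : B w w = R := hw w
  have hsq : (√R)⁻¹ ^ 2 = R⁻¹ := by rw [inv_pow, Real.sq_sqrt (hR ▸ hs w)]
  -- For `R = 0` the witness is `0`, as `(√0)⁻¹ = 0`.
  refine ⟨⟨(√R)⁻¹ • w, ?_, ?_⟩, ?_⟩
  · calc B ((√R)⁻¹ • w) ((√R)⁻¹ • w) = R⁻¹ * R := by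
          simp only [map_smul, LinearMap.smul_apply, smul_eq_mul, hR, ← mul_assoc, ← sq, hsq]
      _ ≤ 1 := inv_mul_le_one
  · calc R = R⁻¹ * R ^ 2 := by rw [sq, ← mul_assoc, inv_mul_mul_self]
      _ = L ((√R)⁻¹ • w) ^ 2 := by
          rw [← hw, map_smul, smul_eq_mul, hR, mul_pow, hsq]
  · rintro r ⟨v, hv, rfl⟩
    calc L v ^ 2 ≤ R * B v v := sq_le_mul_apply_self_of_reproduces hs hB hw v
      _ ≤ R * 1 := mul_le_mul_of_nonneg_left hv (hR ▸ hs w)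
      _ = R := mul_one R

theorem isLeast_sq_le_mul_of_reproduces (hs : ∀ v, 0 ≤ B v v) (hB : LinearMap.IsSymm B)
    (hw : ∀ v, B w v = L v) :
    IsLeast {κ : ℝ | 0 ≤ κ ∧ ∀ v : M, L v ^ 2 ≤ κ * B v v} (L w) := by
  have hR : 0 ≤ L w := hw w ▸ hs w
  refine ⟨⟨hR, sq_le_mul_apply_self_of_reproduces hs hB hw⟩, ?_⟩
  rintro κ ⟨hκ, hbound⟩
  have h := hbound w
  rw [hw, sq] at h
  rcases hR.eq_or_lt with h0 | hpos
  · exact h0 ▸ hκ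
  · exact le_of_mul_le_mul_right h hpos

end LinearMap.BilinForm

namespace ResistanceNetwork

open Finset

variable {V : Type*} [Fintype V] {c : V → V → ℝ}

def laplacian (c : V → V → ℝ) (u : V → ℝ) (s : V) : ℝ :=
  ∑ t, c s t * (u s - u t)

noncomputable def energyForm (c : V → V → ℝ) : LinearMap.BilinForm ℝ (V → ℝ) :=
  LinearMap.mk₂ ℝ (fun u v => (1 / 2) * ∑ s, ∑ t, c s t * (u s - u t) * (v s - v t))
    (by intros; simp only [Pi.add_apply, mul_sum, ← sum_add_distrib]; congr! 2; ring)
    (by intros; simp only [Pi.smul_apply, smul_eq_mul, mul_sum]; congr! 2; ring)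
    (by intros; simp only [Pi.add_apply, mul_sum, ← sum_add_distrib]; congr! 2; ring)
    (by intros; simp only [Pi.smul_apply, smul_eq_mul, mul_sum]; congr! 2; ring)

theorem energyForm_apply (u v : V → ℝ) :
    energyForm c u v = (1 / 2) * ∑ s, ∑ t, c s t * (u s - u t) * (v s - v t) :=
  rfl

theorem energyForm_self (v : V → ℝ) :
    energyForm c v v = (1 / 2) * ∑ s, ∑ t, c s t * (v s - v t) ^ 2 := by
  simp only [energyForm_apply, mul_assoc, sq]

theorem energyForm_isSymm : LinearMap.IsSymm (energyForm c) :=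
  ⟨fun u v => by
    simp only [RingHom.id_apply, energyForm_apply]
    exact congrArg _ <| sum_congr rfl fun _ _ => sum_congr rfl fun _ _ => by ring⟩

theorem energyForm_self_nonneg (hc : ∀ s t, 0 ≤ c s t) (v : V → ℝ) :
    0 ≤ energyForm c v v := by
  rw [energyForm_self]
  exact mul_nonneg (by norm_num) <|
    sum_nonneg fun s _ => sum_nonneg fun t _ => mul_nonneg (hc s t) (sq_nonneg _)

theorem energyForm_eq_sum_laplacian_mul (hc : ∀ s t, c s t = c t s) (u v : V → ℝ) :
    energyForm c u v = ∑ s, laplacian c u s * v s := by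
  have hswap : ∑ s, ∑ t, c s t * (u s - u t) * v t = -∑ s, ∑ t, c s t * (u s - u t) * v s := by
    rw [sum_comm, ← sum_neg_distrib]
    exact sum_congr rfl fun s _ => by
      rw [← sum_neg_distrib]
      exact sum_congr rfl fun t _ => by rw [hc]; ring
  have hsplit : ∑ s, ∑ t, c s t * (u s - u t) * (v s - v t)
      = ∑ s, ∑ t, c s t * (u s - u t) * v s - ∑ s, ∑ t, c s t * (u s - u t) * v t := by
    simp only [← sum_sub_distrib, mul_sub]
  rw [energyForm_apply, hsplit, hswap]
  simp only [laplacian, sum_mul]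
  ring

theorem energyForm_apply_eq_sub_of_laplacian_eq_dipole [DecidableEq V] {w : V → ℝ} {x y : V}
    (hc : ∀ s t, c s t = c t s)
    (hw : ∀ s, laplacian c w s = (if s = x then 1 else 0) - (if s = y then 1 else 0))
    (v : V → ℝ) : energyForm c w v = v x - v y := by
  simp [energyForm_eq_sum_laplacian_mul hc, hw, sub_mul, sum_sub_distrib]

end ResistanceNetwork

open ResistanceNetwork LinearMap.BilinForm

theorem effective_resistance_variational_general {V : Type*} [Fintype V] [DecidableEq V]
    (c : V → V → ℝ)
    (hsymm : ∀ x y, c x y = c y x)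
    (hnonneg : ∀ x y, 0 ≤ c x y)
    (x y : V)
    (w : V → ℝ)
    (hdipole : ∀ s, ∑ t : V, c s t * (w s - w t)
      = (if s = x then (1:ℝ) else 0) - (if s = y then (1:ℝ) else 0)) :
    w x - w y
        = sSup {r : ℝ | ∃ v : V → ℝ,
            (1 / 2) * (∑ s : V, ∑ t : V, c s t * (v s - v t) ^ 2) ≤ 1 ∧
            r = (v x - v y) ^ 2} ∧
      IsLeast {κ : ℝ | 0 ≤ κ ∧ ∀ v : V → ℝ,
            (v x - v y) ^ 2
              ≤ κ * ((1 / 2) * ∑ s : V, ∑ t : V, c s t * (v s - v t) ^ 2)}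
        (w x - w y) := by
  have hs := energyForm_self_nonneg hnonneg
  have hw := energyForm_apply_eq_sub_of_laplacian_eq_dipole hsymm hdipole
  simp only [← energyForm_self]
  exact ⟨(isGreatest_sq_of_reproduces hs energyForm_isSymm hw).csSup_eq.symm,
    isLeast_sq_le_mul_of_reproduces hs energyForm_isSymm hw⟩

/-- On a finite connected resistance network, the effective
resistance `R(x,y) = w(x) − w(y)` (with `Δw = δ_x − δ_y`) equals the supremum of
`|v(x) − v(y)|²` over all `v` with `E(v) ≤ 1`, and is the least constant
`κ ≥ 0` with `|v(x) − v(y)|² ≤ κ E(v)` for all `v`. -/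
theorem effective_resistance_variational {V : Type*} [Fintype V] [DecidableEq V]
    (c : V → V → ℝ)
    (hsymm : ∀ x y, c x y = c y x)
    (hnonneg : ∀ x y, 0 ≤ c x y)
    (hloop : ∀ x, c x x = 0)
    (hconn : ∀ x y : V, Relation.ReflTransGen (fun a b => 0 < c a b) x y)
    (x y : V)
    (w : V → ℝ)
    (hdipole : ∀ s, ∑ t : V, c s t * (w s - w t)
      = (if s = x then (1:ℝ) else 0) - (if s = y then (1:ℝ) else 0)) :
    w x - w y
        = sSup {r : ℝ | ∃ v : V → ℝ,
            (1 / 2) * (∑ s : V, ∑ t : V, c s t * (v s - v t) ^ 2) ≤ 1 ∧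
            r = (v x - v y) ^ 2} ∧
      IsLeast {κ : ℝ | 0 ≤ κ ∧ ∀ v : V → ℝ,
            (v x - v y) ^ 2
              ≤ κ * ((1 / 2) * ∑ s : V, ∑ t : V, c s t * (v s - v t) ^ 2)}
        (w x - w y) :=
  effective_resistance_variational_general c hsymm hnonneg x y w hdipole
end

section
/- The wired resistance never exceeds the free resistance: R^W(x,y) ≤ R^F(x,y) for all vertices x, y, with R^F(x,y) − R^W(x,y) = E(h_x − h_y), where h_x is the harmonic component of v_x. -/
theorem Submodule.norm_sub_sq_eq_add_norm_sub_sq_starProjection {𝕜 E : Type*} [RCLike 𝕜]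
    [NormedAddCommGroup E] [InnerProductSpace 𝕜 E]
    (K : Submodule 𝕜 E) [K.HasOrthogonalProjection] (a b : E) :
    ‖a - b‖ ^ 2 = ‖K.starProjection a - K.starProjection b‖ ^ 2 +
      ‖(a - K.starProjection a) - (b - K.starProjection b)‖ ^ 2 := by
  rw [K.norm_sq_eq_add_norm_sq_starProjection (a - b), starProjection_orthogonal_val, map_sub,
    sub_sub_sub_comm]

theorem wired_le_free_resistance_general {V : Type*} {H : Type*}
    [NormedAddCommGroup H] [InnerProductSpace ℝ H]
    (Fin : Submodule ℝ H) [CompleteSpace Fin]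
    (v : V → H)
    (f : V → H) (hf : ∀ x, f x = (Submodule.orthogonalProjectionOnto Fin (v x) : H))
    (h : V → H) (hh : ∀ x, h x = v x - f x)
    (RF RW : V → V → ℝ)
    (hRF : ∀ x y, RF x y = ‖v x - v y‖ ^ 2)
    (hRW : ∀ x y, RW x y = ‖f x - f y‖ ^ 2)
    (x y : V) :
    RW x y ≤ RF x y ∧ RF x y - RW x y = ‖h x - h y‖ ^ 2 := by
  have hpyth := Fin.norm_sub_sq_eq_add_norm_sub_sq_starProjection (v x) (v y)
  simp only [Submodule.starProjection_apply, ← hf, ← hh] at hpyth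
  rw [hRF, hRW, hpyth]
  exact ⟨le_add_of_nonneg_right (sq_nonneg _), add_sub_cancel_left _ _⟩

/-- In the energy Hilbert space `H_E = Fin ⊕ Harm` (Royden
decomposition), with `f_x` the projection of the energy-kernel element `v_x`
onto `Fin` and `h_x = v_x − f_x` its harmonic component, the wired resistance
`R^W(x,y) = ‖f_x − f_y‖²` never exceeds the free resistance
`R^F(x,y) = ‖v_x − v_y‖²`, and `R^F − R^W = ‖h_x − h_y‖² = E(h_x − h_y)`. -/
theorem wired_le_free_resistance {V : Type*} {H : Type*}
    [NormedAddCommGroup H] [InnerProductSpace ℝ H] [CompleteSpace H]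
    (Fin : Submodule ℝ H) [CompleteSpace Fin]
    (v : V → H)
    (f : V → H) (hf : ∀ x, f x = (Submodule.orthogonalProjectionOnto Fin (v x) : H))
    (h : V → H) (hh : ∀ x, h x = v x - f x)
    (RF RW : V → V → ℝ)
    (hRF : ∀ x y, RF x y = ‖v x - v y‖ ^ 2)
    (hRW : ∀ x y, RW x y = ‖f x - f y‖ ^ 2)
    (x y : V) :
    RW x y ≤ RF x y ∧ RF x y - RW x y = ‖h x - h y‖ ^ 2 :=
  wired_le_free_resistance_general Fin v f hf h hh RF RW hRF hRW x y
end

section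
/- The function (x,y) ↦ R^F(x,y) is negative semidefinite: for any finitely supported f : V → ℝ with Σ_x f(x) = 0, one has Σ_{x,y} f(x) R^F(x,y) f(y) ≤ 0; indeed this sum equals −2‖Σ_x f(x) v_x‖_E². -/
/-!
Expanding `‖v x - v y‖² = ‖v x‖² - 2⟪v x, v y⟫ + ‖v y‖²`, each diagonal term of the double sum
carries a factor `∑ f`, so it vanishes when `∑ f = 0`; what remains is `-2` times the Gram form
`∑ f x f y ⟪v x, v y⟫ = ‖∑ f x • v x‖²`.
-/

open scoped BigOperators InnerProductSpace

section WeightedDistanceSums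

variable {ι H : Type*} [NormedAddCommGroup H] [InnerProductSpace ℝ H]

theorem norm_sum_smul_sq_eq_sum_sum_inner (F : Finset ι) (f : ι → ℝ) (v : ι → H) :
    ‖∑ x ∈ F, f x • v x‖ ^ 2 = ∑ x ∈ F, ∑ y ∈ F, f x * f y * ⟪v x, v y⟫_ℝ := by
  rw [← real_inner_self_eq_norm_sq, sum_inner]
  simp only [inner_sum, real_inner_smul_left, real_inner_smul_right]
  exact Finset.sum_congr rfl fun x _ => Finset.sum_congr rfl fun y _ => by ring

theorem sum_sum_mul_norm_sub_sq_mul (F : Finset ι) (f : ι → ℝ) (v : ι → H) :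
    ∑ x ∈ F, ∑ y ∈ F, f x * ‖v x - v y‖ ^ 2 * f y
      = 2 * (∑ x ∈ F, f x) * (∑ x ∈ F, f x * ‖v x‖ ^ 2)
        - 2 * ‖∑ x ∈ F, f x • v x‖ ^ 2 := by
  have hexpand : ∀ x y, f x * ‖v x - v y‖ ^ 2 * f y
      = f x * ‖v x‖ ^ 2 * f y + f x * (f y * ‖v y‖ ^ 2)
        - 2 * (f x * f y * ⟪v x, v y⟫_ℝ) := fun x y => by
    rw [norm_sub_sq_real]; ring
  simp only [hexpand, Finset.sum_sub_distrib, Finset.sum_add_distrib, ← Finset.mul_sum,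
    ← Finset.sum_mul, norm_sum_smul_sq_eq_sum_sum_inner]
  ring

theorem sum_sum_mul_norm_sub_sq_mul_of_sum_eq_zero {F : Finset ι} {f : ι → ℝ}
    (hf : ∑ x ∈ F, f x = 0) (v : ι → H) :
    ∑ x ∈ F, ∑ y ∈ F, f x * ‖v x - v y‖ ^ 2 * f y = -2 * ‖∑ x ∈ F, f x • v x‖ ^ 2 := by
  rw [sum_sum_mul_norm_sub_sq_mul, hf]
  ring

end WeightedDistanceSums

theorem free_resistance_negative_semidefinite_general {V : Type*} {H : Type*}
    [NormedAddCommGroup H] [InnerProductSpace ℝ H]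
    (v : V → H)
    (RF : V → V → ℝ) (hRF : ∀ x y, RF x y = ‖v x - v y‖ ^ 2)
    (F : Finset V) (f : V → ℝ)
    (hzero : ∑ x ∈ F, f x = 0) :
    (∑ x ∈ F, ∑ y ∈ F, f x * RF x y * f y)
        = -2 * ‖∑ x ∈ F, f x • v x‖ ^ 2 ∧
      ∑ x ∈ F, ∑ y ∈ F, f x * RF x y * f y ≤ 0 := by
  have hquad : ∑ x ∈ F, ∑ y ∈ F, f x * RF x y * f y = -2 * ‖∑ x ∈ F, f x • v x‖ ^ 2 := by
    simp only [hRF]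
    exact sum_sum_mul_norm_sub_sq_mul_of_sum_eq_zero hzero v
  exact ⟨hquad, hquad ▸ mul_nonpos_of_nonpos_of_nonneg (by norm_num) (sq_nonneg _)⟩

/-- `(x,y) ↦ R^F(x,y) = ‖v_x − v_y‖²` is negative semidefinite:
for any finitely supported `f : V → ℝ` with `Σ f = 0`,
`Σ_{x,y} f(x) R^F(x,y) f(y) = −2‖Σ_x f(x) v_x‖² ≤ 0`, where `{v_x} ⊂ H_E` is the
energy kernel and `R^F(x,y) = E(v_x − v_y)`. -/
theorem free_resistance_negative_semidefinite {V : Type*} {H : Type*}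
    [NormedAddCommGroup H] [InnerProductSpace ℝ H]
    (v : V → H)
    (RF : V → V → ℝ) (hRF : ∀ x y, RF x y = ‖v x - v y‖ ^ 2)
    (F : Finset V) (f : V → ℝ)
    (hsupp : ∀ x, f x ≠ 0 → x ∈ F)
    (hzero : ∑ x ∈ F, f x = 0) :
    (∑ x ∈ F, ∑ y ∈ F, f x * RF x y * f y)
        = -2 * ‖∑ x ∈ F, f x • v x‖ ^ 2 ∧
      ∑ x ∈ F, ∑ y ∈ F, f x * RF x y * f y ≤ 0 :=
  free_resistance_negative_semidefinite_general v RF hRF F f hzero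
end

section
/- For the commutator of a multiplication operator with the graph Laplacian on ℓ², one has the bound ‖[M_v, Δ]‖² ≤ 2 E(v) when all conductances equal 1; consequently the finite effective resistance satisfies R(x,y) ≤ sup{ |v(x) − v(y)|² : ‖[M_v, Δ]‖ ≤ √2 }. -/
open Finset

/-! The commutator acts as the weighted adjacency operator with kernel `c x y (v y - v x)`, so
Cauchy–Schwarz in each row, together with `c² ≤ c`, bounds `‖[M_v, Δ]‖²` by
`Σ_{x,y} c x y (v x - v y)² = 2 E(v)`. Hence `E(v) ≤ 1` forces `‖[M_v, Δ]‖ ≤ √2`, and the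
supremum defining `R(x, y)` is over a subset of the second one. Testing the commutator on the
indicator of a vertex shows that `‖[M_v, Δ]‖ ≤ √2` makes `v` vary by at most `√2` along every
edge, so by connectivity the second supremum is over a bounded set and dominates the first. -/

lemma Finset.sq_sum_weight_mul_le {ι : Type*} (s : Finset ι) {w : ι → ℝ}
    (hw₀ : ∀ i ∈ s, 0 ≤ w i) (hw₁ : ∀ i ∈ s, w i ≤ 1) (f g : ι → ℝ) :
    (∑ i ∈ s, w i * f i * g i) ^ 2 ≤ (∑ i ∈ s, w i * f i ^ 2) * ∑ i ∈ s, g i ^ 2 := by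
  refine sum_sq_le_sum_mul_sum_of_sq_le_mul s (fun i hi => mul_nonneg (hw₀ i hi) (sq_nonneg _))
    (fun _ _ => sq_nonneg _) fun i hi => ?_
  have hw_sq : w i ^ 2 ≤ w i := by nlinarith [hw₀ i hi, hw₁ i hi]
  calc (w i * f i * g i) ^ 2 = w i ^ 2 * (f i ^ 2 * g i ^ 2) := by ring
    _ ≤ w i * (f i ^ 2 * g i ^ 2) := by gcongr
    _ = w i * f i ^ 2 * g i ^ 2 := by ring

lemma Relation.ReflTransGen.exists_dist_le_mul {β α : Type*} [PseudoMetricSpace α]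
    {r : β → β → Prop} {x y : β} (h : Relation.ReflTransGen r x y) (L : ℝ) :
    ∃ n : ℕ, ∀ f : β → α, (∀ a b, r a b → dist (f a) (f b) ≤ L) → dist (f x) (f y) ≤ n * L := by
  induction h with
  | refl => exact ⟨0, fun f _ => by simp⟩
  | @tail b d _ hbd ih =>
    obtain ⟨n, hn⟩ := ih
    refine ⟨n + 1, fun f hf => ?_⟩
    calc dist (f x) (f d) ≤ dist (f x) (f b) + dist (f b) (f d) := dist_triangle _ _ _
      _ ≤ n * L + L := add_le_add (hn f hf) (hf b d hbd)
      _ = (n + 1 : ℕ) * L := by push_cast; ring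

namespace WeightedGraph

variable {V : Type*} [Fintype V]

def laplacian (c : V → V → ℝ) (u : V → ℝ) (x : V) : ℝ := ∑ y, c x y * (u x - u y)

lemma mul_laplacian_sub_laplacian_mul (c : V → V → ℝ) (v u : V → ℝ) (x : V) :
    v x * laplacian c u x - laplacian c (fun z => v z * u z) x =
      ∑ y, c x y * (v y - v x) * u y := by
  simp only [laplacian, mul_sum, ← sum_sub_distrib]
  exact sum_congr rfl fun y _ => by ring

theorem sum_sq_commutator_le {c : V → V → ℝ} (hc₀ : ∀ x y, 0 ≤ c x y) (hc₁ : ∀ x y, c x y ≤ 1)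
    (v u : V → ℝ) :
    ∑ x, (v x * laplacian c u x - laplacian c (fun z => v z * u z) x) ^ 2 ≤
      (∑ x, ∑ y, c x y * (v x - v y) ^ 2) * ∑ x, u x ^ 2 := by
  simp only [mul_laplacian_sub_laplacian_mul]
  rw [sum_mul]
  gcongr with x
  calc (∑ y, c x y * (v y - v x) * u y) ^ 2
      ≤ (∑ y, c x y * (v y - v x) ^ 2) * ∑ y, u y ^ 2 :=
        univ.sq_sum_weight_mul_le (fun y _ => hc₀ x y) (fun y _ => hc₁ x y) _ _
    _ = (∑ y, c x y * (v x - v y) ^ 2) * ∑ y, u y ^ 2 := by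
        simp only [sub_sq_comm (v _) (v x)]

lemma sq_weight_mul_sq_le_of_sum_sq_commutator_le [DecidableEq V] {c : V → V → ℝ}
    {v : V → ℝ} {K : ℝ}
    (hv : ∀ u : V → ℝ,
      ∑ x, (v x * laplacian c u x - laplacian c (fun z => v z * u z) x) ^ 2 ≤ K * ∑ x, u x ^ 2)
    (a b : V) : (c a b * (v a - v b)) ^ 2 ≤ K := by
  have hcomm (x : V) :
      ∑ y, c x y * (v y - v x) * (Pi.single b 1 : V → ℝ) y = c x b * (v b - v x) := by
    simp [Pi.single_apply]
  have hnorm : ∑ x, (Pi.single b 1 : V → ℝ) x ^ 2 = 1 := by simp [Pi.single_apply]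
  have h := hv (Pi.single b 1)
  simp only [mul_laplacian_sub_laplacian_mul, hcomm, hnorm, mul_one] at h
  calc (c a b * (v a - v b)) ^ 2 = (c a b * (v b - v a)) ^ 2 := by ring
    _ ≤ ∑ x, (c x b * (v b - v x)) ^ 2 :=
        single_le_sum (f := fun x => (c x b * (v b - v x)) ^ 2) (fun _ _ => sq_nonneg _)
          (mem_univ a)
    _ ≤ K := h

lemma bddAbove_sq_sub_of_sum_sq_commutator_le [DecidableEq V] {c : V → V → ℝ}
    (hc : ∀ a b, 0 < c a b → 1 ≤ c a b) {x y : V}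
    (hxy : Relation.ReflTransGen (fun a b => 0 < c a b) x y) (K : ℝ) :
    BddAbove {r : ℝ | ∃ v : V → ℝ,
      (∀ u : V → ℝ, ∑ z, (v z * laplacian c u z - laplacian c (fun w => v w * u w) z) ^ 2 ≤
        K * ∑ z, u z ^ 2) ∧ r = (v x - v y) ^ 2} := by
  obtain ⟨n, hn⟩ := hxy.exists_dist_le_mul (α := ℝ) √K
  refine ⟨(n * √K) ^ 2, ?_⟩
  rintro _ ⟨v, hv, rfl⟩
  have hedge (a b : V) (hab : 0 < c a b) : dist (v a) (v b) ≤ √K := by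
    refine Real.abs_le_sqrt (le_trans ?_ (sq_weight_mul_sq_le_of_sum_sq_commutator_le hv a b))
    rw [mul_pow]
    exact le_mul_of_one_le_left (sq_nonneg _) (one_le_pow₀ (hc a b hab))
  rw [← sq_abs]
  exact pow_le_pow_left₀ (abs_nonneg _) (hn v hedge) 2

end WeightedGraph

open WeightedGraph in
theorem commutator_bound_and_connes_metric_general {V : Type*} [Fintype V] [DecidableEq V]
    (c : V → V → ℝ)
    (hbool : ∀ x y, c x y = 0 ∨ c x y = 1)
    (hconn : ∀ x y : V, Relation.ReflTransGen (fun a b => 0 < c a b) x y)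
    (Lap : (V → ℝ) → (V → ℝ)) (hLap : ∀ u x, Lap u x = ∑ y : V, c x y * (u x - u y))
    (comm : (V → ℝ) → (V → ℝ) → (V → ℝ))
    (hcomm : ∀ v u x, comm v u x = v x * Lap u x - Lap (fun z => v z * u z) x)
    (E : (V → ℝ) → ℝ)
    (hE : ∀ v, E v = (1 / 2) * ∑ x : V, ∑ y : V, c x y * (v x - v y) ^ 2)
    (R : V → V → ℝ)
    (hR : ∀ x y, R x y = sSup {r : ℝ | ∃ v : V → ℝ, E v ≤ 1 ∧ r = (v x - v y) ^ 2}) :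
    (∀ v u : V → ℝ, ∑ x : V, (comm v u x) ^ 2 ≤ 2 * E v * ∑ x : V, (u x) ^ 2) ∧
    (∀ x y : V, R x y ≤ sSup {r : ℝ | ∃ v : V → ℝ,
        (∀ u : V → ℝ, ∑ z : V, (comm v u z) ^ 2 ≤ 2 * ∑ z : V, (u z) ^ 2) ∧
        r = (v x - v y) ^ 2}) := by
  obtain rfl : Lap = laplacian c := funext₂ hLap
  obtain rfl : comm = fun v u x => v x * laplacian c u x - laplacian c (fun z => v z * u z) x :=
    funext₃ hcomm
  have hc₀ (x y : V) : 0 ≤ c x y := by rcases hbool x y with h | h <;> simp [h]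
  have hc₁ (x y : V) : c x y ≤ 1 := by rcases hbool x y with h | h <;> simp [h]
  have hc_edge (x y : V) (hxy : 0 < c x y) : 1 ≤ c x y := ((hbool x y).resolve_left hxy.ne').ge
  have hcommutator (v u : V → ℝ) :
      ∑ x, (v x * laplacian c u x - laplacian c (fun z => v z * u z) x) ^ 2 ≤
        2 * E v * ∑ x, u x ^ 2 := by
    rw [hE]
    linarith [sum_sq_commutator_le hc₀ hc₁ v u]
  refine ⟨hcommutator, fun x y => ?_⟩
  rw [hR]
  refine csSup_le_csSup (bddAbove_sq_sub_of_sum_sq_commutator_le hc_edge (hconn x y) 2)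
    ⟨0, 0, by simp [hE], by simp⟩ ?_
  rintro _ ⟨v, hEv, rfl⟩
  refine ⟨v, fun u => (hcommutator v u).trans ?_, rfl⟩
  exact mul_le_mul_of_nonneg_right (by linarith) (sum_nonneg fun z _ => sq_nonneg (u z))

/-- On a network with unit conductances, the commutator of
multiplication by `v` with the Laplacian on `ℓ²` satisfies
`‖[M_v, Δ]‖² ≤ 2 E(v)`; consequently the effective resistance
`R(x,y) = sup{|v(x)−v(y)|² : E(v) ≤ 1}` satisfies
`R(x,y) ≤ sup{|v(x)−v(y)|² : ‖[M_v, Δ]‖ ≤ √2}`. -/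
theorem commutator_bound_and_connes_metric {V : Type*} [Fintype V] [DecidableEq V]
    (c : V → V → ℝ)
    (hsymm : ∀ x y, c x y = c y x)
    (hbool : ∀ x y, c x y = 0 ∨ c x y = 1)
    (hloop : ∀ x, c x x = 0)
    (hconn : ∀ x y : V, Relation.ReflTransGen (fun a b => 0 < c a b) x y)
    (Lap : (V → ℝ) → (V → ℝ)) (hLap : ∀ u x, Lap u x = ∑ y : V, c x y * (u x - u y))
    (comm : (V → ℝ) → (V → ℝ) → (V → ℝ))
    (hcomm : ∀ v u x, comm v u x = v x * Lap u x - Lap (fun z => v z * u z) x)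
    (E : (V → ℝ) → ℝ)
    (hE : ∀ v, E v = (1 / 2) * ∑ x : V, ∑ y : V, c x y * (v x - v y) ^ 2)
    (R : V → V → ℝ)
    (hR : ∀ x y, R x y = sSup {r : ℝ | ∃ v : V → ℝ, E v ≤ 1 ∧ r = (v x - v y) ^ 2}) :
    (∀ v u : V → ℝ, ∑ x : V, (comm v u x) ^ 2 ≤ 2 * E v * ∑ x : V, (u x) ^ 2) ∧
    (∀ x y : V, R x y ≤ sSup {r : ℝ | ∃ v : V → ℝ,
        (∀ u : V → ℝ, ∑ z : V, (comm v u z) ^ 2 ≤ 2 * ∑ z : V, (u z) ^ 2) ∧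
        r = (v x - v y) ^ 2}) :=
  commutator_bound_and_connes_metric_general c hbool hconn Lap hLap comm hcomm E hE R hR
end
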